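/- Suppose nonnegative sequences (x_t) and (φ_t) satisfy x_{t+1} ≤ (1 - p/2)x_t + (6(1-p)/p)η²(φ_t² + σ²) with x_0 = 0, where p ∈ (0,1], η, σ ≥ 0, and the gradient norms change slowly: φ_t² ≤ (1 + p/4)φ_{t+1}² for all t. Then x_{t+1} ≤ (24(1-p)η²/p²)(φ_t² + σ²) for all t ≥ 0. -/
import Mathlib


/-- Consensus distance bound under slowly changing gradient norms
(Corollary C.2, abstract form). -/
theorem stmt_4 (p η σ : ℝ) (hp : p ∈ Set.Ioc (0 : ℝ) 1)
    (hη : 0 ≤ η) (hσ : 0 ≤ σ)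
    (x φ : ℕ → ℝ) (hxnonneg : ∀ t, 0 ≤ x t) (hφnonneg : ∀ t, 0 ≤ φ t)
    (hx0 : x 0 = 0)
    (hrec : ∀ t, x (t + 1) ≤ (1 - p / 2) * x t
      + (6 * (1 - p) / p) * η ^ 2 * (φ t ^ 2 + σ ^ 2))
    (hslow : ∀ t, φ t ^ 2 ≤ (1 + p / 4) * φ (t + 1) ^ 2) :
    ∀ t, x (t + 1) ≤ (24 * (1 - p) * η ^ 2 / p ^ 2) * (φ t ^ 2 + σ ^ 2) := by
  obtain ⟨hp0, hp1⟩ := hp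
  have hp2 : (0:ℝ) < p ^ 2 := by positivity
  have h1p : 0 ≤ 1 - p := by linarith
  have hη2 : 0 ≤ η ^ 2 := sq_nonneg η
  intro t
  induction t with
  | zero =>
      have h := hrec 0
      rw [hx0] at h
      have hs : 0 ≤ φ 0 ^ 2 + σ ^ 2 := by positivity
      have key : (6 * (1 - p) / p) * η ^ 2 ≤ 24 * (1 - p) * η ^ 2 / p ^ 2 := by
        rw [div_mul_eq_mul_div, div_le_div_iff₀ hp0 hp2]
        nlinarith [mul_nonneg (mul_nonneg h1p hη2) (sq_nonneg p)]
      nlinarith [mul_le_mul_of_nonneg_right key hs]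
  | succ n ih =>
      have h := hrec (n + 1)
      have hs := hslow n
      have hco : 0 ≤ 1 - p / 2 := by linarith
      have step : x (n + 1 + 1) ≤ (1 - p / 2) * ((24 * (1 - p) * η ^ 2 / p ^ 2) * (φ n ^ 2 + σ ^ 2))
          + (6 * (1 - p) / p) * η ^ 2 * (φ (n + 1) ^ 2 + σ ^ 2) := by
        nlinarith [mul_le_mul_of_nonneg_left ih hco]
      refine step.trans ?_
      rw [← sub_nonneg]
      have eq1 : (24 * (1 - p) * η ^ 2 / p ^ 2) * (φ (n+1) ^ 2 + σ ^ 2)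
          - ((1 - p / 2) * ((24 * (1 - p) * η ^ 2 / p ^ 2) * (φ n ^ 2 + σ ^ 2))
            + (6 * (1 - p) / p) * η ^ 2 * (φ (n+1) ^ 2 + σ ^ 2))
          = ((24 - 6 * p) * ((1 - p) * η ^ 2) * (φ (n+1) ^ 2 + σ ^ 2)
            - (24 - 12 * p) * ((1 - p) * η ^ 2) * (φ n ^ 2 + σ ^ 2)) / p ^ 2 := by
        field_simp
        ring
      rw [eq1]
      apply div_nonneg _ hp2.le
      have hA : 0 ≤ (1 - p) * η ^ 2 := mul_nonneg h1p hη2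
      nlinarith [mul_le_mul_of_nonneg_left hs hA, mul_nonneg hA (sq_nonneg (φ (n+1))),
        mul_nonneg hA (sq_nonneg σ), mul_nonneg (mul_nonneg hA (sq_nonneg (φ (n+1)))) hp0.le,
        mul_nonneg (mul_nonneg hA (sq_nonneg σ)) hp0.le,
        mul_nonneg (mul_nonneg hA (sq_nonneg (φ (n+1)))) (mul_nonneg hp0.le hp0.le)]
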